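/- arXiv:2004.13101 — 2 statements merged into one kernel-verified Lean document; each statement's English description precedes it below -/
import Mathlib

section
/- Let q be an odd prime power. The number of pairs (B, F) where B ∈ F_{q²}, A ∈ F_q, F(T) = (T−A)(T−B)(T−B^q) has coefficients S = A + B + B^q, R = AB + AB^q + B^{q+1}, P = AB^{q+1}, and (S−P)² + 8P − 4R is a nonzero square in F_q, equals (q³ − 2q² + 2q + 3)/2. -/
/-!
Write `t = Tr B` and `m = N B`. As a function of `A ∈ F_q`, `(S - P)^2 + 8P - 4R` is the
polynomial `discr t m A`, and for any `f` twice the number of `A` with `χ (f A) = 1` is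
`∑ χ (f A) + q - #{f = 0}`. For `B ∉ {0, 1}` with `N B ≠ 1`, completing the square turns
`discr t m` into `x ^ 2 - m k ^ 2` with `k ≠ 0` (`t ≠ 1 + m` because `N (B - 1) = m - t + 1`),
and the sum `∑ χ (x ^ 2 - δ) = -1`, read off from the `q - 1` points of `x ^ 2 - y ^ 2 = δ`,
gives `q - 2 - χ m`. The cases `B = 0`, `B = 1`, `N B = 1` are degenerate (a square, zero, an
affine function). Summing over `B`, `∑ χ (N B)` vanishes because the norm `Lˣ → Kˣ` is
surjective with fibres of equal size `q + 1`.
-/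

open Finset

lemma card_filter_prod_eq_sum {α β : Type*} [Fintype α] [Fintype β] (P : α × β → Prop)
    [DecidablePred P] : #{p | P p} = ∑ a, #{b | P (a, b)} := by
  simp only [card_filter, Fintype.sum_prod_type]

section QuadraticChar

variable {F : Type*} [Field F] [Fintype F]

lemma card_filter_affine {P : F → Prop} [DecidablePred P] {a : F} (ha : a ≠ 0) (b : F) :
    #{x | P (a * x + b)} = #{x | P x} :=
  card_equiv ((Equiv.mulLeft₀ a ha).trans (Equiv.addRight b)) (by simp)

variable [DecidableEq F]

lemma quadraticChar_eq_one_iff_exists_sq {a : F} :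
    quadraticChar F a = 1 ↔ ∃ u ≠ 0, a = u ^ 2 := by
  rcases eq_or_ne a 0 with rfl | ha
  · simp [eq_comm (a := (0 : F))]
  · rw [quadraticChar_one_iff_isSquare ha]
    constructor
    · rintro ⟨u, rfl⟩
      exact ⟨u, left_ne_zero_of_mul ha, (sq u).symm⟩
    · rintro ⟨u, -, rfl⟩
      exact ⟨u, sq u⟩

lemma card_sqrts_eq (hF : ringChar F ≠ 2) (a : F) :
    (#{x : F | x ^ 2 = a} : ℤ) = quadraticChar F a + 1 := by
  rw [← quadraticChar_card_sqrts hF a, Set.toFinset_ofPred]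

lemma two_mul_card_quadraticChar_comp_eq_one {α : Type*} [Fintype α] (f : α → F) :
    (2 * #{x | quadraticChar F (f x) = 1} : ℤ) =
      ∑ x, quadraticChar F (f x) + Fintype.card α - #{x | f x = 0} := by
  have pointwise (a : F) : (2 * if quadraticChar F a = 1 then 1 else 0 : ℤ) =
      quadraticChar F a + 1 - if a = 0 then 1 else 0 := by
    rcases eq_or_ne a 0 with rfl | ha
    · simp
    · rcases quadraticChar_dichotomy ha with h | h <;> simp [h, ha]
  simp only [card_filter, Nat.cast_sum, Nat.cast_ite, Nat.cast_one, Nat.cast_zero, mul_sum,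
    pointwise, sum_sub_distrib, sum_add_distrib, ← card_univ, sum_const]
  ring

lemma card_sq_sub_sq_eq (hF : ringChar F ≠ 2) {δ : F} (hδ : δ ≠ 0) :
    #{p : F × F | p.1 ^ 2 - p.2 ^ 2 = δ} = Fintype.card F - 1 := by
  have h2 : (2 : F) ≠ 0 := Ring.two_ne_zero hF
  rw [← card_univ, ← card_erase_of_mem (mem_univ 0), ← filter_ne']
  -- `x ^ 2 - u ^ 2 = (x - u) (x + u)`, so the hyperbola is parametrized by `x - u ≠ 0`
  refine card_nbij' (fun p => p.1 - p.2) (fun a => ((a + δ / a) / 2, (δ / a - a) / 2))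
    ?_ ?_ ?_ ?_
  · rintro ⟨x, u⟩ h
    simp only [coe_filter, mem_univ, true_and, Set.mem_ofPred_eq] at h ⊢
    rintro hxu
    exact hδ (by rw [← h]; linear_combination (x + u) * hxu)
  · intro a ha
    simp only [coe_filter, mem_univ, true_and, Set.mem_ofPred_eq] at ha ⊢
    field_simp
    ring
  · rintro ⟨x, u⟩ h
    simp only [coe_filter, mem_univ, true_and, Set.mem_ofPred_eq] at h
    have hxu : x - u ≠ 0 := fun hxu => hδ (by rw [← h]; linear_combination (x + u) * hxu)
    ext <;> field_simp <;> linear_combination -h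
  · intro a ha
    simp only [coe_filter, mem_univ, true_and, Set.mem_ofPred_eq] at ha
    field_simp
    ring

lemma sum_quadraticChar_sq_sub (hF : ringChar F ≠ 2) {δ : F} (hδ : δ ≠ 0) :
    ∑ x : F, quadraticChar F (x ^ 2 - δ) = -1 := by
  have hcount : ∑ x : F, (#{u : F | u ^ 2 = x ^ 2 - δ} : ℤ) = Fintype.card F - 1 := by
    have h := card_filter_prod_eq_sum (fun p : F × F => p.2 ^ 2 = p.1 ^ 2 - δ)
    rw [filter_congr fun p _ => by rw [eq_sub_iff_add_eq, ← eq_sub_iff_add_eq', eq_comm],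
      card_sq_sub_sq_eq hF hδ] at h
    rw [← Nat.cast_sum, ← h, Nat.cast_sub Fintype.card_pos, Nat.cast_one]
  simp only [card_sqrts_eq hF, sum_add_distrib, sum_const, card_univ, nsmul_eq_mul,
    mul_one] at hcount
  linarith

lemma two_mul_card_quadraticChar_sq_sub_eq_one (hF : ringChar F ≠ 2) {δ : F} (hδ : δ ≠ 0) :
    (2 * #{x : F | quadraticChar F (x ^ 2 - δ) = 1} : ℤ) =
      Fintype.card F - 2 - quadraticChar F δ := by
  rw [two_mul_card_quadraticChar_comp_eq_one, sum_quadraticChar_sq_sub hF hδ]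
  simp_rw [sub_eq_zero]
  rw [card_sqrts_eq hF]
  ring

lemma two_mul_card_quadraticChar_eq_one (hF : ringChar F ≠ 2) :
    (2 * #{x : F | quadraticChar F x = 1} : ℤ) = Fintype.card F - 1 := by
  have h := two_mul_card_quadraticChar_comp_eq_one (F := F) id
  simp only [id, quadraticChar_sum_zero hF, filter_eq', mem_univ, if_true, card_singleton] at h
  rw [h]
  push_cast
  ring

end QuadraticChar

section NormFibers

variable {K L : Type*} [Field K] [DecidableEq K] [Field L] [Fintype L] [Algebra K L]

lemma card_norm_eq_of_ne_zero {m : K} (hm : m ≠ 0) :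
    #{x : L | Algebra.norm K x = m} = #{x : L | Algebra.norm K x = 1} := by
  classical
  let normUnits : Lˣ →* Kˣ := Units.map (Algebra.norm K)
  have units_fiber (v : Kˣ) : #{x : L | Algebra.norm K x = v} = #{u | normUnits u = v} := by
    symm
    refine card_bij (fun u _ => (u : L)) (fun u hu => ?_) (fun _ _ _ _ h => Units.val_injective h)
      fun x hx => ?_
    · simpa [normUnits, Units.ext_iff] using hu
    · simp only [mem_filter_univ] at hx
      have hx0 : x ≠ 0 := by
        rintro rfl
        exact v.ne_zero (by simpa using hx.symm)
      exact ⟨Units.mk0 x hx0, by simpa [normUnits, Units.ext_iff] using hx, rfl⟩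
  have hsurj := FiniteField.unitsMap_norm_surjective K L
  have h := MonoidHom.card_fiber_eq_of_mem_range normUnits (hsurj (Units.mk0 m hm)) (hsurj 1)
  rwa [← units_fiber, ← units_fiber, Units.val_mk0, Units.val_one] at h

variable [Fintype K]

lemma card_norm_eq_one_mul :
    #{x : L | Algebra.norm K x = 1} * (Fintype.card K - 1) = Fintype.card L - 1 := by
  have hzero : #{x : L | Algebra.norm K x = 0} = 1 :=
    card_eq_one.mpr ⟨0, by ext x; simp [Algebra.norm_eq_zero_iff]⟩
  have h := card_eq_sum_card_fiberwise (f := Algebra.norm K) (s := (univ : Finset L))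
    (t := univ) (fun _ _ => mem_univ _)
  rw [← add_sum_erase _ _ (mem_univ 0), hzero,
    sum_congr rfl fun m hm => card_norm_eq_of_ne_zero (ne_of_mem_erase hm), sum_const,
    card_erase_of_mem (mem_univ 0), card_univ, smul_eq_mul, card_univ] at h
  rw [h, add_tsub_cancel_left, mul_comm]

lemma sum_quadraticChar_norm (hF : ringChar K ≠ 2) :
    ∑ x : L, quadraticChar K (Algebra.norm K x) = 0 := by
  have fiber (m : K) :
      ∑ x ∈ {x : L | Algebra.norm K x = m}, quadraticChar K (Algebra.norm K x) =
        #{x : L | Algebra.norm K x = 1} * quadraticChar K m := by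
    rw [sum_congr rfl fun x hx => by rw [(mem_filter.mp hx).2], sum_const, nsmul_eq_mul]
    rcases eq_or_ne m 0 with rfl | hm
    · simp
    · rw [card_norm_eq_of_ne_zero hm]
  rw [← sum_fiberwise univ (Algebra.norm K), sum_congr rfl fun m _ => fiber m, ← mul_sum,
    quadraticChar_sum_zero hF, mul_zero]

end NormFibers

section QuadraticExtension

variable {K L : Type*} [Field K] [Fintype K] [Field L] [Fintype L] [Algebra K L] {q : ℕ}

lemma finrank_eq_two_of_card (hK : Fintype.card K = q) (hL : Fintype.card L = q ^ 2) :
    Module.finrank K L = 2 := by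
  have h := Module.card_eq_pow_finrank (K := K) (V := L)
  rw [hK, hL] at h
  exact (Nat.pow_right_injective (hK ▸ Fintype.one_lt_card) h).symm

lemma algebraMap_trace_eq_add_pow (hK : Fintype.card K = q) (hL : Fintype.card L = q ^ 2)
    (B : L) : algebraMap K L (Algebra.trace K L B) = B + B ^ q := by
  rw [FiniteField.algebraMap_trace_eq_sum_pow, finrank_eq_two_of_card hK hL,
    Nat.card_eq_fintype_card, hK]
  simp [sum_range_succ]

lemma algebraMap_norm_eq_pow_succ (hK : Fintype.card K = q) (hL : Fintype.card L = q ^ 2)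
    (B : L) : algebraMap K L (Algebra.norm K B) = B ^ (q + 1) := by
  rw [FiniteField.algebraMap_norm_eq_prod_pow, finrank_eq_two_of_card hK hL,
    Nat.card_eq_fintype_card, hK]
  simp [prod_range_succ, pow_succ']

lemma norm_sub_one_eq (hK : Fintype.card K = q) (hL : Fintype.card L = q ^ 2) (B : L) :
    Algebra.norm K (B - 1) = Algebra.norm K B - Algebra.trace K L B + 1 := by
  apply (algebraMap K L).injective
  have hfrob : (B - 1) ^ q = B ^ q - 1 := by
    simpa [FiniteField.coe_frobeniusAlgHom, hK] using
      map_sub (FiniteField.frobeniusAlgHom K L) B 1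
  simp only [map_add, map_sub, map_one, algebraMap_norm_eq_pow_succ hK hL,
    algebraMap_trace_eq_add_pow hK hL, pow_succ, hfrob]
  ring

lemma trace_eq_one_add_norm_iff (hK : Fintype.card K = q) (hL : Fintype.card L = q ^ 2)
    (B : L) : Algebra.trace K L B = 1 + Algebra.norm K B ↔ B = 1 := by
  rw [← sub_eq_zero (a := B), ← Algebra.norm_eq_zero_iff (R := K), norm_sub_one_eq hK hL]
  constructor <;> intro h <;> linear_combination -h

lemma card_norm_eq_one [DecidableEq K] (hK : Fintype.card K = q) (hL : Fintype.card L = q ^ 2) :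
    #{x : L | Algebra.norm K x = 1} = q + 1 := by
  have hq : 2 ≤ q := hK ▸ Fintype.one_lt_card
  have h := card_norm_eq_one_mul (K := K) (L := L)
  rw [hK, hL, show q ^ 2 - 1 = (q + 1) * (q - 1) by
    rw [← Nat.sq_sub_sq, one_pow]] at h
  exact Nat.eq_of_mul_eq_mul_right (by omega) h

end QuadraticExtension

section Discr

variable {K : Type*} [Field K] [Fintype K] [DecidableEq K]

/-- With `t = B + B ^ q` and `m = B ^ (q + 1)`, this is `(S - P) ^ 2 + 8 * P - 4 * R` for
`S = A + t`, `P = A * m`, `R = A * t + m`. -/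
def discr (t m A : K) : K := (A + t - A * m) ^ 2 + 8 * (A * m) - 4 * (A * t + m)

lemma card_quadraticChar_discr_zero_zero :
    #{A : K | quadraticChar K (discr 0 0 A) = 1} = Fintype.card K - 1 := by
  have h (A : K) : quadraticChar K (discr 0 0 A) = 1 ↔ A ≠ 0 := by
    rw [show discr 0 0 A = A ^ 2 by unfold discr; ring]
    refine ⟨fun h hA => ?_, quadraticChar_sq_one'⟩
    simp [hA] at h
  simp_rw [h, filter_ne', card_erase_of_mem (mem_univ _), card_univ]

lemma card_quadraticChar_discr_two_one : #{A : K | quadraticChar K (discr 2 1 A) = 1} = 0 := by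
  have h (A : K) : discr 2 1 A = 0 := by unfold discr; ring
  simp [h]

lemma two_mul_card_quadraticChar_discr_one (hF : ringChar K ≠ 2) {t : K} (ht : t ≠ 2) :
    (2 * #{A : K | quadraticChar K (discr t 1 A) = 1} : ℤ) = Fintype.card K - 1 := by
  have h2 := Ring.two_ne_zero hF
  have hslope : 2 * 2 * (2 - t) ≠ 0 := mul_ne_zero (mul_ne_zero h2 h2) (sub_ne_zero.mpr ht.symm)
  have hlin (A : K) : discr t 1 A = 2 * 2 * (2 - t) * A + (t ^ 2 - 4) := by unfold discr; ring
  simp_rw [hlin]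
  rw [card_filter_affine (P := fun x => quadraticChar K x = 1) hslope,
    two_mul_card_quadraticChar_eq_one hF]

lemma two_mul_card_quadraticChar_discr (hF : ringChar K ≠ 2) {t m : K} (hm0 : m ≠ 0)
    (hm1 : m ≠ 1) (ht : t ≠ 1 + m) :
    (2 * #{A : K | quadraticChar K (discr t m A) = 1} : ℤ) =
      Fintype.card K - 2 - quadraticChar K m := by
  have h1m : 1 - m ≠ 0 := sub_ne_zero.mpr hm1.symm
  set k := 2 * (t - 1 - m) / (1 - m)
  have hk : k ≠ 0 := div_ne_zero (mul_ne_zero (Ring.two_ne_zero hF)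
    (by rwa [sub_sub, sub_ne_zero])) h1m
  have hsq (A : K) :
      discr t m A = ((1 - m) * A + (4 * m - t - t * m) / (1 - m)) ^ 2 - m * k ^ 2 := by
    unfold discr k
    field_simp
    ring
  simp_rw [hsq]
  rw [card_filter_affine (P := fun x => quadraticChar K (x ^ 2 - m * k ^ 2) = 1) h1m,
    two_mul_card_quadraticChar_sq_sub_eq_one hF (mul_ne_zero hm0 (pow_ne_zero 2 hk)),
    map_mul, quadraticChar_sq_one' hk, mul_one]

end Discr

section Count

variable {K L : Type*} [Field K] [Fintype K] [DecidableEq K] [Field L] [Fintype L] [Algebra K L]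
  {q : ℕ}

lemma two_mul_card_quadraticChar_discr_trace_norm [DecidableEq L] (hF : ringChar K ≠ 2)
    (hK : Fintype.card K = q) (hL : Fintype.card L = q ^ 2) (B : L) :
    (2 * #{A : K | quadraticChar K (discr (Algebra.trace K L B) (Algebra.norm K B) A) = 1} : ℤ) =
      q - 2 - quadraticChar K (Algebra.norm K B) + (if B = 0 then (q : ℤ) else 0) -
        (if B = 1 then (q : ℤ) - 1 else 0) + (if Algebra.norm K B = 1 then 2 else 0) := by
  have hq : 1 ≤ q := hK ▸ Fintype.card_pos
  have hB1 := trace_eq_one_add_norm_iff hK hL B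
  by_cases hB0 : B = 0
  · subst hB0
    simp only [map_zero, Algebra.norm_zero, card_quadraticChar_discr_zero_zero, hK]
    simp [hq]
    ring
  by_cases hB : B = 1
  · subst hB
    have ht : Algebra.trace K L 1 = 2 := by rw [hB1.mpr rfl, map_one]; norm_num
    rw [ht, map_one, card_quadraticChar_discr_two_one]
    simp
  by_cases hm1 : Algebra.norm K B = 1
  · rw [hm1] at hB1 ⊢
    have ht : Algebra.trace K L B ≠ 2 := fun ht => hB (hB1.mp (by rw [ht]; norm_num))
    rw [two_mul_card_quadraticChar_discr_one hF ht, hK]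
    simp [hB0, hB]
    ring
  · have hm0 : Algebra.norm K B ≠ 0 := Algebra.norm_ne_zero_iff.mpr hB0
    rw [two_mul_card_quadraticChar_discr hF hm0 hm1 (hB ∘ hB1.mp), hK]
    simp [hB0, hB, hm1]

lemma two_mul_sum_card_quadraticChar_discr_trace_norm [DecidableEq L] (hF : ringChar K ≠ 2)
    (hK : Fintype.card K = q) (hL : Fintype.card L = q ^ 2) :
    (2 * ∑ B : L,
        #{A : K | quadraticChar K (discr (Algebra.trace K L B) (Algebra.norm K B) A) = 1} : ℤ) =
      q ^ 3 - 2 * q ^ 2 + 2 * q + 3 := by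
  push_cast
  rw [mul_sum]
  simp only [two_mul_card_quadraticChar_discr_trace_norm hF hK hL, sum_add_distrib,
    sum_sub_distrib, sum_const, card_univ, hL, sum_ite_eq', mem_univ, if_true, sum_quadraticChar_norm hF,
    sum_ite, card_norm_eq_one hK hL]
  ring

lemma exists_eq_sq_iff_quadraticChar_discr (hK : Fintype.card K = q)
    (hL : Fintype.card L = q ^ 2) (B : L) (A : K) :
    (∃ u : K, u ≠ 0 ∧
      (algebraMap K L A + B + B ^ q - algebraMap K L A * B ^ (q + 1)) ^ 2 +
        8 * (algebraMap K L A * B ^ (q + 1)) -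
        4 * (algebraMap K L A * B + algebraMap K L A * B ^ q + B ^ (q + 1)) =
        algebraMap K L u ^ 2) ↔
      quadraticChar K (discr (Algebra.trace K L B) (Algebra.norm K B) A) = 1 := by
  have hB : B ^ q = algebraMap K L (Algebra.trace K L B) - B := by
    rw [algebraMap_trace_eq_add_pow hK hL]; ring
  rw [quadraticChar_eq_one_iff_exists_sq, hB, ← algebraMap_norm_eq_pow_succ hK hL]
  refine exists_congr fun u => and_congr_right fun _ => ?_
  rw [← (algebraMap K L).injective.eq_iff]
  simp only [discr, map_add, map_sub, map_mul, map_pow, map_ofNat]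
  constructor <;> intro h <;> linear_combination h

end Count

theorem stmt5_general (q : ℕ) (hodd : Odd q)
    (K L : Type*) [Field K] [Fintype K] [Field L] [Fintype L] [Algebra K L]
    (hK : Fintype.card K = q) (hL : Fintype.card L = q ^ 2) :
    Nat.card {x : L × K | ∃ u : K, u ≠ 0 ∧
      ((algebraMap K L x.2 + x.1 + x.1 ^ q - algebraMap K L x.2 * x.1 ^ (q + 1)) ^ 2 +
        8 * (algebraMap K L x.2 * x.1 ^ (q + 1)) -
        4 * (algebraMap K L x.2 * x.1 + algebraMap K L x.2 * x.1 ^ q + x.1 ^ (q + 1))) =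
        (algebraMap K L u) ^ 2} =
      (q ^ 3 - 2 * q ^ 2 + 2 * q + 3) / 2 := by
  classical
  have hF : ringChar K ≠ 2 := by
    rw [Ne, FiniteField.even_card_iff_char_two, hK, ← Nat.even_iff]
    exact Nat.not_even_iff_odd.mpr hodd
  have hq : 2 * q ^ 2 ≤ q ^ 3 := by
    have : 2 ≤ q := hK ▸ Fintype.one_lt_card
    rw [pow_succ' q 2]; exact Nat.mul_le_mul_right _ this
  have hsum := two_mul_sum_card_quadraticChar_discr_trace_norm hF hK hL
  rw [Nat.card_eq_card_toFinset, Set.toFinset_ofPred, card_filter_prod_eq_sum]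
  simp_rw [exists_eq_sq_iff_quadraticChar_discr hK hL]
  zify [hq] at hsum ⊢
  omega

/-- For `q` an odd prime power, the number of pairs `(B, A) ∈ F_{q²} × F_q`
such that, with `S = A + B + B^q`, `R = AB + AB^q + B^{q+1}`, `P = AB^{q+1}`,
the element `(S−P)² + 8P − 4R` is a nonzero square in `F_q`, equals `(q³−2q²+2q+3)/2`. -/
theorem stmt5 (p n q : ℕ) [Fact p.Prime] (hn : 0 < n) (hq : q = p ^ n) (hodd : Odd q)
    (K L : Type*) [Field K] [Fintype K] [Field L] [Fintype L] [Algebra K L]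
    (hK : Fintype.card K = q) (hL : Fintype.card L = q ^ 2) :
    Nat.card {x : L × K | ∃ u : K, u ≠ 0 ∧
      ((algebraMap K L x.2 + x.1 + x.1 ^ q - algebraMap K L x.2 * x.1 ^ (q + 1)) ^ 2 +
        8 * (algebraMap K L x.2 * x.1 ^ (q + 1)) -
        4 * (algebraMap K L x.2 * x.1 + algebraMap K L x.2 * x.1 ^ q + x.1 ^ (q + 1))) =
        (algebraMap K L u) ^ 2} =
      (q ^ 3 - 2 * q ^ 2 + 2 * q + 3) / 2 :=
  stmt5_general q hodd K L hK hL
end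

section
/- Let q = 2^n. The number of pairs (t, (S,R,P)) with t,S,R,P ∈ F_q such that t³ + St² + Rt + P = 0, P ≠ S, and there exists U ∈ F_q with (P+S)²U² + (P+S)²U + R(S+P+R+1) = 0, equals (q³−q)/2. -/
/-!
In characteristic 2 the cubic equation determines `P = t³ + St² + Rt`, and with
`D = P + S = t³ + St² + Rt + S` the substitution `U = V + R/D` turns the quadratic in `U` into
`D²(V² + V) = R`. The map `V ↦ D²(V² + V)` is additive with kernel `{0, 1}`, so for `D ≠ 0`
exactly `q/2` values of `R` are admissible. For `t ≠ 1`, `S ↦ D` is a bijection, giving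
`(q - 1) · q/2` pairs `(S, R)`; for `t = 1` we get `D = R + 1` and every `R ≠ 1` works, giving
`q(q - 1)` pairs. In total `q(q - 1) + (q - 1)² q/2 = (q³ - q)/2`.
-/

open Finset

section CharTwo

variable {F : Type*} [Field F] [CharP F 2]

lemma sq_add_self_eq_zero_iff {x : F} : x ^ 2 + x = 0 ↔ x = 0 ∨ x = 1 := by
  rw [sq, ← mul_add_one, mul_eq_zero, CharTwo.add_eq_zero]

def mulSqAddSelf (c : F) : F →+ F where
  toFun x := c * (x ^ 2 + x)
  map_zero' := by simp
  map_add' x y := by rw [CharTwo.add_sq]; ring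

lemma mulSqAddSelf_apply (c x : F) : mulSqAddSelf c x = c * (x ^ 2 + x) := rfl

lemma two_mul_card_range_mulSqAddSelf [Finite F] {c : F} (hc : c ≠ 0) :
    2 * Nat.card (mulSqAddSelf c).range = Nat.card F := by
  have hker : ((mulSqAddSelf c).ker : Set F) = {0, 1} := by
    ext x
    simp [mulSqAddSelf_apply, hc, sq_add_self_eq_zero_iff]
  have hcard : Nat.card (mulSqAddSelf c).ker = 2 := by
    rw [← SetLike.coe_sort_coe, hker, Nat.card_coe_set_eq, Set.ncard_pair zero_ne_one]
  rw [← hcard, ← AddSubgroup.index_ker, AddSubgroup.card_mul_index]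

/-- `D` stands for `P + S`. -/
def Admissible (D R : F) : Prop :=
  D ≠ 0 ∧ ∃ U : F, D ^ 2 * U ^ 2 + D ^ 2 * U + R * (D + R + 1) = 0

lemma admissible_iff {D R : F} :
    Admissible D R ↔ D ≠ 0 ∧ R ∈ (mulSqAddSelf (D ^ 2)).range := by
  refine and_congr_right fun hD => ?_
  have hDD : D * D⁻¹ = 1 := mul_inv_cancel₀ hD
  have h2 : (2 : F) = 0 := CharTwo.two_eq_zero
  simp only [AddMonoidHom.mem_range, mulSqAddSelf_apply]
  -- the roots `U` and `V` of the two equations correspond via `V = U + R / D`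
  constructor
  · rintro ⟨U, hU⟩
    refine ⟨U + R * D⁻¹, ?_⟩
    linear_combination hU + (R ^ 2 * (D * D⁻¹ + 1) + R * D) * hDD
      + (D ^ 2 * U * R * D⁻¹ - R) * h2
  · rintro ⟨V, hV⟩
    refine ⟨V + R * D⁻¹, ?_⟩
    linear_combination hV + (R ^ 2 * (D * D⁻¹ + 1) + R * D) * hDD
      + (D ^ 2 * V * R * D⁻¹ + R ^ 2 + R * D + R) * h2

open scoped Classical in
lemma card_admissible [Fintype F] {D : F} (hD : D ≠ 0) :
    #{R | Admissible D R} = Fintype.card F / 2 := by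
  have h := two_mul_card_range_mulSqAddSelf (pow_ne_zero 2 hD)
  simp only [admissible_iff, hD, ne_eq, not_false_eq_true, true_and]
  rw [← Fintype.card_subtype, ← Nat.card_eq_fintype_card, ← Nat.card_eq_fintype_card]
  omega

open scoped Classical in
lemma sum_card_admissible [Fintype F] :
    ∑ D : F, #{R | Admissible D R} = (Fintype.card F - 1) * (Fintype.card F / 2) := by
  rw [← sum_erase_add _ _ (mem_univ 0),
    sum_congr rfl fun D hD => card_admissible (ne_of_mem_erase hD)]
  simp [Admissible, card_erase_of_mem]

lemma admissible_one_iff {S R : F} :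
    Admissible (1 ^ 3 + S * 1 ^ 2 + R * 1 + S) R ↔ R ≠ 1 := by
  have h2 : (2 : F) = 0 := CharTwo.two_eq_zero
  have hD : (1 : F) ^ 3 + S * 1 ^ 2 + R * 1 + S = R + 1 := by linear_combination S * h2
  rw [hD, Admissible, Ne, CharTwo.add_eq_zero, and_iff_left_iff_imp]
  exact fun _ => ⟨0, by linear_combination R * (R + 1) * h2⟩

lemma bijective_add_mul_sq_add {t : F} (ht : t ≠ 1) (R : F) :
    Function.Bijective fun S : F => t ^ 3 + S * t ^ 2 + R * t + S := by
  have hc : t ^ 2 + 1 ≠ 0 := by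
    rw [← one_pow 2, ← CharTwo.add_sq]
    exact pow_ne_zero 2 (mt CharTwo.add_eq_zero.mp ht)
  have hf : (fun S : F => t ^ 3 + S * t ^ 2 + R * t + S) =
      (· + (t ^ 3 + R * t)) ∘ (· * (t ^ 2 + 1)) := by
    ext S
    simp only [Function.comp_apply]
    ring
  rw [hf]
  exact (Equiv.addRight _).bijective.comp (Equiv.mulRight₀ _ hc).bijective

open scoped Classical in
lemma sum_card_admissible_one [Fintype F] :
    ∑ S : F, #{R | Admissible (1 ^ 3 + S * 1 ^ 2 + R * 1 + S) R} =
      Fintype.card F * (Fintype.card F - 1) := by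
  simp only [admissible_one_iff]
  simp [filter_ne', card_erase_of_mem]

open scoped Classical in
lemma sum_card_admissible_of_ne_one [Fintype F] {t : F} (ht : t ≠ 1) :
    ∑ S : F, #{R | Admissible (t ^ 3 + S * t ^ 2 + R * t + S) R} =
      (Fintype.card F - 1) * (Fintype.card F / 2) := by
  rw [← sum_card_admissible]
  simp only [card_filter]
  rw [sum_comm]
  conv_rhs => rw [sum_comm]
  exact sum_congr rfl fun R _ =>
    Fintype.sum_bijective _ (bijective_add_mul_sq_add ht R) _ _ fun _ => rfl

lemma cubic_system_iff (t S R P : F) :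
    (t ^ 3 + S * t ^ 2 + R * t + P = 0 ∧ P ≠ S ∧ ∃ U : F,
        (P + S) ^ 2 * U ^ 2 + (P + S) ^ 2 * U + R * (S + P + R + 1) = 0) ↔
      P = t ^ 3 + S * t ^ 2 + R * t ∧ Admissible (t ^ 3 + S * t ^ 2 + R * t + S) R := by
  rw [CharTwo.add_eq_zero, eq_comm]
  refine and_congr_right fun hP => ?_
  subst hP
  rw [Admissible, Ne, Ne, CharTwo.add_eq_zero, add_comm S, add_assoc _ S, add_comm S,
    ← add_assoc]

def cubicSystem (F : Type*) [Field F] : Set (F × F × F × F) :=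
  {x | x.1 ^ 3 + x.2.1 * x.1 ^ 2 + x.2.2.1 * x.1 + x.2.2.2 = 0 ∧
    x.2.2.2 ≠ x.2.1 ∧ ∃ U : F,
      (x.2.2.2 + x.2.1) ^ 2 * U ^ 2 + (x.2.2.2 + x.2.1) ^ 2 * U +
        x.2.2.1 * (x.2.1 + x.2.2.2 + x.2.2.1 + 1) = 0}

open scoped Classical in
lemma card_cubicSystem_eq_sum [Fintype F] :
    Nat.card (cubicSystem F) =
      ∑ t : F, ∑ S : F, #{R | Admissible (t ^ 3 + S * t ^ 2 + R * t + S) R} := by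
  rw [cubicSystem, Nat.card_coe_set_eq, Set.ncard_eq_toFinset_card', Set.toFinset_ofPred,
    card_filter]
  simp only [Fintype.sum_prod_type, cubic_system_iff, ite_and, sum_ite_eq', mem_univ, if_true,
    card_filter]

lemma card_cubicSystem [Fintype F] :
    Nat.card (cubicSystem F) = (Fintype.card F ^ 3 - Fintype.card F) / 2 := by
  classical
  rw [card_cubicSystem_eq_sum, ← add_sum_erase _ _ (mem_univ 1), sum_card_admissible_one,
    sum_congr rfl fun t ht => sum_card_admissible_of_ne_one (ne_of_mem_erase ht), sum_const,
    card_erase_of_mem (mem_univ 1), card_univ, smul_eq_mul]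
  have hq := two_mul_card_range_mulSqAddSelf (F := F) one_ne_zero
  rw [Nat.card_eq_fintype_card (α := F)] at hq
  obtain ⟨m, hm⟩ : ∃ m, Fintype.card F = 2 * m := ⟨_, hq.symm⟩
  have hm1 : 1 ≤ m := by have := Fintype.card_pos (α := F); omega
  rw [hm, Nat.mul_div_cancel_left m two_pos]
  refine (Nat.div_eq_of_eq_mul_left two_pos ?_).symm
  zify [hm1, show 1 ≤ 2 * m by omega,
    show 2 * m ≤ (2 * m) ^ 3 from Nat.le_self_pow (by norm_num) _]
  ring

end CharTwo

lemma charP_two_of_card_eq_two_pow {F : Type*} [Field F] [Fintype F] {n : ℕ}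
    (h : Fintype.card F = 2 ^ n) : CharP F 2 := by
  have hcast := FiniteField.cast_card_eq_zero F
  rw [h, Nat.cast_pow, Nat.cast_ofNat] at hcast
  exact CharTwo.of_one_ne_zero_of_two_eq_zero one_ne_zero (eq_zero_of_pow_eq_zero hcast)

theorem stmt10_general (n q : ℕ) (hq : q = 2 ^ n)
    (F : Type*) [Field F] [Fintype F] (hF : Fintype.card F = q) :
    Nat.card {x : F × F × F × F |
      x.1 ^ 3 + x.2.1 * x.1 ^ 2 + x.2.2.1 * x.1 + x.2.2.2 = 0 ∧
      x.2.2.2 ≠ x.2.1 ∧ ∃ U : F,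
        (x.2.2.2 + x.2.1) ^ 2 * U ^ 2 + (x.2.2.2 + x.2.1) ^ 2 * U +
          x.2.2.1 * (x.2.1 + x.2.2.2 + x.2.2.1 + 1) = 0} = (q ^ 3 - q) / 2 := by
  have := charP_two_of_card_eq_two_pow (hF.trans hq)
  rw [← hF]
  exact card_cubicSystem

/-- For `q = 2^n`, the number of pairs `(t, (S,R,P))` with
`t³ + St² + Rt + P = 0`, `P ≠ S`, and `(P+S)²U² + (P+S)²U + R(S+P+R+1) = 0` solvable
for `U ∈ F_q`, equals `(q³−q)/2`. -/
theorem stmt10 (n q : ℕ) (hn : 0 < n) (hq : q = 2 ^ n)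
    (F : Type*) [Field F] [Fintype F] (hF : Fintype.card F = q) :
    Nat.card {x : F × F × F × F |
      x.1 ^ 3 + x.2.1 * x.1 ^ 2 + x.2.2.1 * x.1 + x.2.2.2 = 0 ∧
      x.2.2.2 ≠ x.2.1 ∧ ∃ U : F,
        (x.2.2.2 + x.2.1) ^ 2 * U ^ 2 + (x.2.2.2 + x.2.1) ^ 2 * U +
          x.2.2.1 * (x.2.1 + x.2.2.2 + x.2.2.1 + 1) = 0} = (q ^ 3 - q) / 2 :=
  stmt10_general n q hq F hF
end
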